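/- arXiv:1601.03084 — 4 statements merged into one kernel-verified Lean document; each statement's English description precedes it below -/
import Mathlib

section
/- Let G be a topological group acting continuously on a topological space X, let K be a compact Hausdorff space with a continuous G-action, and let i : X → K be a continuous G-equivariant map. Then for every continuous function f : K → ℝ, the composition f ∘ i is a π-uniform bounded continuous function on X. -/
open Filter Topology

theorem ContinuousMap.tendstoUniformly_comp_smul {G K E : Type*} [TopologicalSpace G]
    [TopologicalSpace K] [CompactSpace K] [SMul G K] [ContinuousSMul G K] [UniformSpace E]
    (f : C(K, E)) (g₀ : G) :
    TendstoUniformly (fun (g : G) k => f (g • k)) (fun k => f (g₀ • k)) (𝓝 g₀) := by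
  -- The curried action is continuous into `C(K, E)`, whose compact-open topology is the
  -- topology of uniform convergence because `K` is compact.
  let translate : C(G, C(K, E)) := (f.comp ⟨fun p : G × K => p.1 • p.2, continuous_smul⟩).curry
  exact ContinuousMap.tendsto_iff_tendstoUniformly.mp (translate.continuous.tendsto g₀)

theorem stmt_4_general (G X K : Type*) [TopologicalSpace G] [Group G]
    [TopologicalSpace X] [MulAction G X]
    [TopologicalSpace K] [CompactSpace K] [MulAction G K] [ContinuousSMul G K]
    (i : X → K) (hi : Continuous i) (heq : ∀ (g : G) (x : X), i (g • x) = g • i x)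
    (f : C(K, ℝ)) :
    Continuous (f ∘ i) ∧ (∃ C : ℝ, ∀ x : X, |f (i x)| ≤ C) ∧
    ∀ ε : ℝ, 0 < ε → ∃ V ∈ nhds (1 : G), ∀ x : X, ∀ v ∈ V,
      |f (i x) - f (i (v • x))| < ε := by
  refine ⟨f.continuous.comp hi, ⟨‖f‖, fun x => f.norm_coe_le_norm (i x)⟩, fun ε hε => ?_⟩
  have hf := f.tendstoUniformly_comp_smul (1 : G)
  simp only [one_smul] at hf
  refine ⟨_, Metric.tendstoUniformly_iff.mp hf ε hε, fun x v hv => ?_⟩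
  simpa only [heq, Real.dist_eq] using hv (i x)

theorem stmt_4 (G X K : Type*) [TopologicalSpace G] [Group G] [IsTopologicalGroup G]
    [TopologicalSpace X] [MulAction G X] [ContinuousSMul G X]
    [TopologicalSpace K] [CompactSpace K] [T2Space K] [MulAction G K] [ContinuousSMul G K]
    (i : X → K) (hi : Continuous i) (heq : ∀ (g : G) (x : X), i (g • x) = g • i x)
    (f : C(K, ℝ)) :
    Continuous (f ∘ i) ∧ (∃ C : ℝ, ∀ x : X, |f (i x)| ≤ C) ∧
    ∀ ε : ℝ, 0 < ε → ∃ V ∈ nhds (1 : G), ∀ x : X, ∀ v ∈ V,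
      |f (i x) - f (i (v • x))| < ε :=
  stmt_4_general G X K i hi heq f
end

section
/- Let G be a topological group acting continuously on a topological space X. If every π-uniform bounded continuous real-valued function on X is constant, then every equivariant compactification of X is a subsingleton: for every compact Hausdorff space K with a continuous G-action and every continuous G-equivariant map i : X → K with dense image, K has at most one point. -/
/-!
A continuous function `f` on a compact `G`-space `K` is uniformly continuous along the action
(tube lemma applied to `(v, k) ↦ (f k, f (v • k))` at `{1} × K`), so `f ∘ i` is a bounded
π-uniform function on `X` and hence constant. By density of `i`, `f` itself is constant.
If `K` had two points, Urysohn's lemma would give an `f` separating them.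
-/

open Filter Topology Uniformity

theorem CompactSpace.eventually_forall_mem_uniformity_smul {G K α : Type*} [TopologicalSpace G]
    [Monoid G] [TopologicalSpace K] [CompactSpace K] [MulAction G K] [ContinuousSMul G K]
    [UniformSpace α] {f : K → α} (hf : Continuous f) {U : Set (α × α)} (hU : U ∈ 𝓤 α) :
    ∀ᶠ v in 𝓝 (1 : G), ∀ k : K, (f k, f (v • k)) ∈ U := by
  have hφ : Continuous fun p : G × K => (f p.2, f (p.1 • p.2)) :=
    (hf.comp continuous_snd).prodMk (hf.comp continuous_smul)
  have hlocal (k : K) : ∀ᶠ p : G × K in 𝓝 (1, k), (f p.2, f (p.1 • p.2)) ∈ U := by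
    refine hφ.continuousAt.eventually_mem ?_
    simpa only [one_smul] using nhds_le_uniformity (f k) hU
  simpa using isCompact_univ.eventually_forall_of_forall_eventually fun k _ => hlocal k

theorem stmt_5_general (G X : Type*) [TopologicalSpace G] [Group G]
    [TopologicalSpace X] [MulAction G X]
    (h : ∀ f : X → ℝ, Continuous f → (∃ C : ℝ, ∀ x : X, |f x| ≤ C) →
      (∀ ε : ℝ, 0 < ε → ∃ V ∈ nhds (1 : G), ∀ x : X, ∀ v ∈ V, |f x - f (v • x)| < ε) →
      ∀ x y : X, f x = f y) :
    ∀ (K : Type*) [TopologicalSpace K] [CompactSpace K] [T2Space K] [MulAction G K]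
      [ContinuousSMul G K] (i : X → K), Continuous i →
      (∀ (g : G) (x : X), i (g • x) = g • i x) → DenseRange i → Subsingleton K := by
  intro K _ _ _ _ _ i hi hequiv hdense
  refine ⟨fun a b => by_contra fun hab => ?_⟩
  obtain ⟨f, hfa, hfb, hf01⟩ := exists_continuous_zero_one_of_isClosed
    (isClosed_singleton (x := a)) (isClosed_singleton (x := b)) (by simpa using hab)
  have hbounded : ∃ C : ℝ, ∀ x : X, |f (i x)| ≤ C :=
    ⟨1, fun x => abs_le.mpr ⟨by linarith [(hf01 (i x)).1], (hf01 (i x)).2⟩⟩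
  have huniform (ε : ℝ) (hε : 0 < ε) :
      ∃ V ∈ 𝓝 (1 : G), ∀ x : X, ∀ v ∈ V, |f (i x) - f (i (v • x))| < ε := by
    refine ⟨_, CompactSpace.eventually_forall_mem_uniformity_smul f.continuous
      (Metric.dist_mem_uniformity hε), fun x v hv => ?_⟩
    simpa only [hequiv, Real.dist_eq, Set.mem_ofPred_eq] using hv (i x)
  obtain ⟨x₀⟩ := hdense.nonempty_iff.mpr ⟨a⟩
  have hconst : (f : K → ℝ) = fun _ => f (i x₀) :=
    hdense.equalizer f.continuous continuous_const
      (funext fun x => h _ (f.continuous.comp hi) hbounded huniform x x₀)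
  have hfab : f a = f b := (congrFun hconst a).trans (congrFun hconst b).symm
  simp [hfa rfl, hfb rfl] at hfab

theorem stmt_5 (G X : Type*) [TopologicalSpace G] [Group G] [IsTopologicalGroup G]
    [TopologicalSpace X] [MulAction G X] [ContinuousSMul G X]
    (h : ∀ f : X → ℝ, Continuous f → (∃ C : ℝ, ∀ x : X, |f x| ≤ C) →
      (∀ ε : ℝ, 0 < ε → ∃ V ∈ nhds (1 : G), ∀ x : X, ∀ v ∈ V, |f x - f (v • x)| < ε) →
      ∀ x y : X, f x = f y) :
    ∀ (K : Type*) [TopologicalSpace K] [CompactSpace K] [T2Space K] [MulAction G K]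
      [ContinuousSMul G K] (i : X → K), Continuous i →
      (∀ (g : G) (x : X), i (g • x) = g • i x) → DenseRange i → Subsingleton K :=
  stmt_5_general G X h
end

section
/- Let G be a topological group acting continuously on a topological space X, and let x, y ∈ X be points such that f(x) = f(y) for every π-uniform bounded continuous real-valued function f on X. Then for every compact Hausdorff space K with a continuous G-action and every continuous G-equivariant map i : X → K with dense image, one has i(x) = i(y). -/
open Filter Topology

/-!
If `i x ≠ i y`, Urysohn's lemma gives a continuous `f : K → ℝ` separating them. On the compact
space `K`, continuity of the action makes `f` uniformly continuous along small group elements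
(a tube-lemma argument), and equivariance of `i` transfers this to `f ∘ i`, which is therefore
a π-uniform function on `X` separating `x` and `y`.
-/

def IsPiUniform (G : Type*) {X : Type*} [TopologicalSpace G] [One G] [SMul G X]
    [TopologicalSpace X] (f : X → ℝ) : Prop :=
  Continuous f ∧ (∃ C : ℝ, ∀ z : X, |f z| ≤ C) ∧
    ∀ ε : ℝ, 0 < ε → ∃ V ∈ 𝓝 (1 : G), ∀ z : X, ∀ v ∈ V, |f z - f (v • z)| < ε

section

variable {G X K : Type*} [TopologicalSpace G] [Monoid G]
  [TopologicalSpace X] [MulAction G X] [TopologicalSpace K] [MulAction G K]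

theorem isPiUniform_of_compactSpace [CompactSpace K] [ContinuousSMul G K] {f : K → ℝ}
    (hf : Continuous f) : IsPiUniform G f := by
  refine ⟨hf, ?_, fun ε hε ↦ ?_⟩
  · obtain ⟨C, hC⟩ := isCompact_univ.exists_bound_of_continuousOn hf.continuousOn
    exact ⟨C, fun z ↦ by simpa only [Real.norm_eq_abs] using hC z (Set.mem_univ z)⟩
  · have hnear : ∀ k ∈ (Set.univ : Set K),
        ∀ᶠ p : G × K in 𝓝 (1, k), |f p.2 - f (p.1 • p.2)| < ε := by
      intro k _
      have hcont : Continuous fun p : G × K ↦ |f p.2 - f (p.1 • p.2)| := by fun_prop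
      exact hcont.continuousAt.eventually_lt continuousAt_const (by simpa using hε)
    exact ⟨_, isCompact_univ.eventually_forall_of_forall_eventually hnear,
      fun z v hv ↦ hv z (Set.mem_univ z)⟩

theorem IsPiUniform.comp_equivariant {f : K → ℝ} (hf : IsPiUniform G f) {i : X → K}
    (hi : Continuous i) (hequiv : ∀ (g : G) (z : X), i (g • z) = g • i z) :
    IsPiUniform G (f ∘ i) := by
  obtain ⟨hcont, ⟨C, hC⟩, hunif⟩ := hf
  refine ⟨hcont.comp hi, ⟨C, fun z ↦ hC (i z)⟩, fun ε hε ↦ ?_⟩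
  obtain ⟨V, hV, hVε⟩ := hunif ε hε
  exact ⟨V, hV, fun z v hv ↦ by simpa only [Function.comp_apply, hequiv] using hVε (i z) v hv⟩

end

theorem stmt_6_general (G X : Type*) [TopologicalSpace G] [Group G]
    [TopologicalSpace X] [MulAction G X] (x y : X)
    (h : ∀ f : X → ℝ, Continuous f → (∃ C : ℝ, ∀ z : X, |f z| ≤ C) →
      (∀ ε : ℝ, 0 < ε → ∃ V ∈ nhds (1 : G), ∀ z : X, ∀ v ∈ V, |f z - f (v • z)| < ε) →
      f x = f y) :
    ∀ (K : Type*) [TopologicalSpace K] [CompactSpace K] [T2Space K] [MulAction G K]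
      [ContinuousSMul G K] (i : X → K), Continuous i →
      (∀ (g : G) (z : X), i (g • z) = g • i z) → DenseRange i → i x = i y := by
  intro K _ _ _ _ _ i hi hequiv _
  by_contra hne
  obtain ⟨f, hfx, hfy, -⟩ := exists_continuous_zero_one_of_isClosed
    (isClosed_singleton (x := i x)) (isClosed_singleton (x := i y))
    (Set.disjoint_singleton.mpr hne)
  obtain ⟨hcont, hbdd, hunif⟩ :=
    (isPiUniform_of_compactSpace (G := G) f.continuous).comp_equivariant hi hequiv
  have hsep : f (i x) = f (i y) := h _ hcont hbdd hunif
  simp [hfx rfl, hfy rfl] at hsep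

theorem stmt_6 (G X : Type*) [TopologicalSpace G] [Group G] [IsTopologicalGroup G]
    [TopologicalSpace X] [MulAction G X] [ContinuousSMul G X] (x y : X)
    (h : ∀ f : X → ℝ, Continuous f → (∃ C : ℝ, ∀ z : X, |f z| ≤ C) →
      (∀ ε : ℝ, 0 < ε → ∃ V ∈ nhds (1 : G), ∀ z : X, ∀ v ∈ V, |f z - f (v • z)| < ε) →
      f x = f y) :
    ∀ (K : Type*) [TopologicalSpace K] [CompactSpace K] [T2Space K] [MulAction G K]
      [ContinuousSMul G K] (i : X → K), Continuous i →
      (∀ (g : G) (z : X), i (g • z) = g • i z) → DenseRange i → i x = i y :=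
  stmt_6_general G X x y h
end

section
/- Let M be the metric fan and G the Megrelishvili group with the compact-open topology, acting on M by evaluation. Then the action map G × M → M is continuous. -/
noncomputable section

/-- The group of self-homeomorphisms of a topological space, under composition. -/
instance homeoGroup (X : Type*) [TopologicalSpace X] : Group (X ≃ₜ X) where
  mul a b := b.trans a
  one := Homeomorph.refl X
  inv := Homeomorph.symm
  mul_assoc a b c := Homeomorph.ext fun _ => rfl
  one_mul a := Homeomorph.ext fun _ => rfl
  mul_one a := Homeomorph.ext fun _ => rfl
  inv_mul_cancel a := Homeomorph.ext fun x => a.symm_apply_apply x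

/-- The real Hilbert space `ℓ²(ℕ₊)`. -/
abbrev FanAmbient : Type := lp (fun _ : ℕ+ => ℝ) 2

/-- The `n`-th basic vector `eₙ` of `ℓ²(ℕ₊)`, `n ≥ 1`. -/
def fanBasis (n : ℕ+) : FanAmbient := lp.single 2 n 1

/-- The metric fan: the union of the straight-line segments `[0, eₙ]`, `n ≥ 1`,
inside `ℓ²(ℕ₊)`, with the subspace topology. -/
def MetricFan : Set FanAmbient := ⋃ n : ℕ+, segment ℝ 0 (fanBasis n)

/-- The marked points of the metric fan: the points `(1/k)eₙ`, `k, n ≥ 1`. -/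
def FanMarked : Set ↥MetricFan :=
  {x | ∃ k n : ℕ+, (x : FanAmbient) = ((k : ℝ))⁻¹ • fanBasis n}

/-- The Megrelishvili group: all homeomorphisms of the metric fan fixing every
marked point. -/
def MegGroup : Subgroup (↥MetricFan ≃ₜ ↥MetricFan) where
  carrier := {g | ∀ x ∈ FanMarked, g x = x}
  one_mem' := fun x _ => rfl
  mul_mem' := by
    intro a b ha hb x hx
    show a (b x) = x
    rw [hb x hx, ha x hx]
  inv_mem' := by
    intro a ha x hx
    show a.symm x = x
    conv_lhs => rw [← ha x hx]
    exact a.symm_apply_apply x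

/-- The Megrelishvili group carries the compact-open topology. -/
instance : TopologicalSpace MegGroup :=
  TopologicalSpace.induced
    (fun g : MegGroup => toContinuousMap (g : ↥MetricFan ≃ₜ ↥MetricFan))
    ContinuousMap.compactOpen

/-- The endpoint `eₙ` of the metric fan. -/
def fanPoint (n : ℕ+) : ↥MetricFan :=
  ⟨fanBasis n, Set.mem_iUnion.2 ⟨n, right_mem_segment ℝ 0 (fanBasis n)⟩⟩

/-- The base point `0` of the metric fan. -/
def fanZero : ↥MetricFan :=
  ⟨0, Set.mem_iUnion.2 ⟨1, left_mem_segment ℝ 0 (fanBasis 1)⟩⟩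

/-!
Away from the apex `0` the fan is locally compact (a point `t • eₙ` with `t > 0` has the
compact neighbourhood `[0, eₙ]`), and evaluation `C(X, Y) × X → Y` is continuous at every
point with a compact neighbourhood.

At the apex, continuity is uniform in `g`: every `g ∈ G` fixes `0` and maps the ball of
radius `1/k` into itself. Indeed, if `‖x‖ ≤ 1/k < ‖g x‖`, then along the segment `[0, x] ⊆ M`
the function `‖g ·‖` takes the value `1/k` at some `y`. Every point of `M` of norm `1/k` is
marked, so `g (g y) = g y`, whence `g y = y` and `1/k = ‖y‖ ≤ ‖x‖`. Then `x` is marked too,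
contradicting `‖g x‖ > ‖x‖`.
-/

open Set Filter Topology Function

theorem ContinuousMap.continuousAt_eval_of_isCompact_mem_nhds {X Y : Type*} [TopologicalSpace X]
    [TopologicalSpace Y] [R1Space Y] {f : C(X, Y)} {x : X} {K : Set X} (hK : IsCompact K)
    (hKx : K ∈ 𝓝 x) : ContinuousAt (fun p : C(X, Y) × X => p.1 p.2) (f, x) := by
  simp_rw [ContinuousAt, (nhds_basis_opens _).tendsto_right_iff]
  rintro U ⟨hfx, hU⟩
  obtain ⟨L, hLx, hL, hLU⟩ :=
    exists_mem_nhds_isCompact_mapsTo_of_isCompact_mem_nhds f.continuous (hU.mem_nhds hfx) hK hKx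
  filter_upwards [prod_mem_nhds (eventually_mapsTo hL hU hLU) hLx] using fun _ h ↦ h.1 h.2

theorem StarConvex.norm_apply_le_of_fixes_sphere {E : Type*} [SeminormedAddCommGroup E]
    [NormedSpace ℝ E] {M : Set E} (hM : StarConvex ℝ 0 M) {g : M → M} (hg : Continuous g)
    (hinj : Injective g) (h0 : ∀ x : M, (x : E) = 0 → g x = x) {r : ℝ}
    (hr : ∀ x : M, ‖(x : E)‖ = r → g x = x) {x : M} (hx : ‖(x : E)‖ ≤ r) :
    ‖(g x : E)‖ ≤ r := by
  by_contra! hgx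
  let γ : Icc (0 : ℝ) 1 → M := fun s => ⟨(s : ℝ) • (x : E), hM.smul_mem x.2 s.2.1 s.2.2⟩
  have hγ : Continuous γ := by fun_prop
  have hγ0 : g (γ ⊥) = γ ⊥ := h0 _ (by simp [γ])
  have hγ1 : γ ⊤ = x := Subtype.ext (by simp [γ])
  have hr0 : ‖(g (γ ⊥) : E)‖ ≤ r := by
    rw [hγ0]; simpa [γ] using (norm_nonneg _).trans hx
  obtain ⟨_, ⟨s, rfl⟩, hs⟩ := (isPreconnected_range hγ).intermediate_value (mem_range_self ⊥)
    (mem_range_self ⊤) (f := fun y => ‖(g y : E)‖) (by fun_prop)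
    (show r ∈ Icc _ _ from ⟨hr0, by rw [hγ1]; exact hgx.le⟩)
  have hfix : g (γ s) = γ s := hinj (hr _ hs)
  have hxr : ‖(x : E)‖ = r := by
    refine le_antisymm hx ?_
    calc r = ‖(γ s : E)‖ := by rw [← hfix]; exact hs.symm
      _ = (s : ℝ) * ‖(x : E)‖ := by simp [γ, norm_smul, abs_of_nonneg s.2.1]
      _ ≤ ‖(x : E)‖ := mul_le_of_le_one_left (norm_nonneg _) s.2.2
  exact hgx.ne' (by rw [hr x hxr, hxr])

theorem smul_fanBasis (t : ℝ) (n : ℕ+) : t • fanBasis n = lp.single 2 n t := by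
  rw [fanBasis, ← lp.single_smul, smul_eq_mul, mul_one]

theorem norm_smul_fanBasis (t : ℝ) (n : ℕ+) : ‖t • fanBasis n‖ = |t| := by
  rw [smul_fanBasis, lp.norm_single (by norm_num), Real.norm_eq_abs]

theorem segment_zero_fanBasis (n : ℕ+) :
    segment ℝ 0 (fanBasis n) = (· • fanBasis n) '' Icc (0 : ℝ) 1 := by
  simp [segment_eq_image']

theorem mem_metricFan_iff {x : FanAmbient} :
    x ∈ MetricFan ↔ ∃ n : ℕ+, ∃ t ∈ Icc (0 : ℝ) 1, t • fanBasis n = x := by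
  simp only [MetricFan, segment_zero_fanBasis, mem_iUnion, mem_image]

theorem starConvex_metricFan : StarConvex ℝ 0 MetricFan :=
  starConvex_iUnion fun _ => (convex_segment _ _).starConvex (left_mem_segment ℝ _ _)

@[simp]
theorem coe_fanZero : (fanZero : FanAmbient) = 0 := rfl

theorem dist_fanZero (x : MetricFan) : dist x fanZero = ‖(x : FanAmbient)‖ :=
  dist_zero_right (x : FanAmbient)

theorem mem_fanMarked_of_norm_eq {x : MetricFan} {k : ℕ+}
    (hx : ‖(x : FanAmbient)‖ = (k : ℝ)⁻¹) : x ∈ FanMarked := by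
  obtain ⟨n, t, ht, hxt⟩ := mem_metricFan_iff.1 x.2
  rw [← hxt, norm_smul_fanBasis, abs_of_nonneg ht.1] at hx
  exact ⟨k, n, by rw [← hxt, hx]⟩

theorem fanZero_mem_closure_fanMarked : fanZero ∈ closure FanMarked := by
  let x : ℕ → MetricFan := fun k => ⟨((k : ℝ) + 1)⁻¹ • fanBasis 1,
    starConvex_metricFan.smul_mem (fanPoint 1).2 (by positivity)
      (inv_le_one_of_one_le₀ (by simp))⟩
  refine mem_closure_of_tendsto (f := x) (b := atTop) ?_
    (Eventually.of_forall fun k => ⟨k.succPNat, 1, ?_⟩)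
  · rw [tendsto_subtype_rng]
    simpa [x] using (tendsto_one_div_add_atTop_nhds_zero_nat (𝕜 := ℝ)).smul_const (fanBasis 1)
  · simp [x]

theorem mem_segment_fanBasis_of_dist_lt {n : ℕ+} {t : ℝ} {y : FanAmbient} (hy : y ∈ MetricFan)
    (h : dist y (t • fanBasis n) < t) : y ∈ segment ℝ 0 (fanBasis n) := by
  obtain ⟨m, s, hs, rfl⟩ := mem_metricFan_iff.1 hy
  obtain rfl | hmn := eq_or_ne m n
  · rw [segment_zero_fanBasis]; exact ⟨s, hs, rfl⟩
  · have hn : (s • fanBasis m - t • fanBasis n) n = -t := by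
      simp [smul_fanBasis, lp.single_apply, hmn.symm]
    have := lp.norm_apply_le_norm (by norm_num) (s • fanBasis m - t • fanBasis n) n
    rw [hn, norm_neg, Real.norm_eq_abs, ← dist_eq_norm] at this
    exact absurd ((le_abs_self t).trans this) h.not_ge

theorem exists_isCompact_mem_nhds_of_ne_fanZero {x : MetricFan} (hx : x ≠ fanZero) :
    ∃ K : Set MetricFan, IsCompact K ∧ K ∈ 𝓝 x := by
  obtain ⟨n, t, ht, hxt⟩ := mem_metricFan_iff.1 x.2
  have ht0 : 0 < t := ht.1.lt_of_ne fun h => hx (Subtype.ext (by simp [← hxt, ← h]))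
  have hsub : segment ℝ 0 (fanBasis n) ⊆ MetricFan :=
    subset_iUnion (fun n => segment ℝ 0 (fanBasis n)) n
  refine ⟨(↑) ⁻¹' segment ℝ 0 (fanBasis n), ?_, ?_⟩
  · rw [Subtype.isCompact_iff, Subtype.image_preimage_coe, inter_eq_right.2 hsub,
      segment_zero_fanBasis]
    exact isCompact_Icc.image (by fun_prop)
  · filter_upwards [Metric.ball_mem_nhds x ht0] with y hy
    exact mem_segment_fanBasis_of_dist_lt y.2 (by rwa [hxt])

namespace MegGroup

variable (g : MegGroup)

theorem apply_fanZero : (g : MetricFan ≃ₜ MetricFan) fanZero = fanZero :=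
  closure_minimal (fun x hx => g.2 x hx)
    (isClosed_eq (g : MetricFan ≃ₜ MetricFan).continuous continuous_id)
    fanZero_mem_closure_fanMarked

theorem norm_apply_le {x : MetricFan} {k : ℕ+} (hx : ‖(x : FanAmbient)‖ ≤ (k : ℝ)⁻¹) :
    ‖((g : MetricFan ≃ₜ MetricFan) x : FanAmbient)‖ ≤ (k : ℝ)⁻¹ :=
  starConvex_metricFan.norm_apply_le_of_fixes_sphere (g : MetricFan ≃ₜ MetricFan).continuous
    (g : MetricFan ≃ₜ MetricFan).injective
    (fun y hy => by obtain rfl : y = fanZero := Subtype.ext hy; exact apply_fanZero g)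
    (fun y hy => g.2 y (mem_fanMarked_of_norm_eq hy)) hx

theorem continuousAt_apply_fanZero (g₀ : MegGroup) :
    ContinuousAt (fun p : MegGroup × MetricFan => (p.1 : MetricFan ≃ₜ MetricFan) p.2)
      (g₀, fanZero) := by
  rw [ContinuousAt, apply_fanZero, Metric.tendsto_nhds]
  intro ε hε
  obtain ⟨k, hk⟩ := exists_nat_one_div_lt hε
  have hk' : ((k.succPNat : ℕ+) : ℝ)⁻¹ < ε := by simpa using hk
  filter_upwards [continuousAt_snd.preimage_mem_nhds
    (Metric.closedBall_mem_nhds fanZero (by positivity : (0 : ℝ) < (k.succPNat : ℝ)⁻¹))]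
    with p hp
  rw [mem_preimage, Metric.mem_closedBall, dist_fanZero] at hp
  rw [dist_fanZero]
  exact (norm_apply_le p.1 hp).trans_lt hk'

end MegGroup

theorem stmt_12 :
    Continuous (fun p : MegGroup × ↥MetricFan =>
      (p.1 : ↥MetricFan ≃ₜ ↥MetricFan) p.2) := by
  rw [continuous_iff_continuousAt]
  rintro ⟨g₀, x₀⟩
  obtain rfl | hx₀ := eq_or_ne x₀ fanZero
  · exact MegGroup.continuousAt_apply_fanZero g₀
  · obtain ⟨K, hK, hKx⟩ := exists_isCompact_mem_nhds_of_ne_fanZero hx₀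
    have hG : Continuous fun g : MegGroup => toContinuousMap (g : MetricFan ≃ₜ MetricFan) :=
      continuous_induced_dom
    exact (ContinuousMap.continuousAt_eval_of_isCompact_mem_nhds hK hKx).comp_of_eq
      (hG.prodMap continuous_id).continuousAt rfl
end
end
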